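/- arXiv:math/0403089 — 4 statements merged into one kernel-verified Lean document; each statement's English description precedes it below -/
import Mathlib

section
/- With the notation of the splicing construction, the rotated–translated copy u of r₂ satisfies u''(L₁) = r₁''(L₁); consequently the spliced curve r : [0, L₁+L₂] → ℝ³ is twice continuously differentiable (C²). -/
/-! The map `A = frameRot r₁ L₁ r₂ L₂` is linear and sends the Frenet frame of `r₂` at `0`,
which is orthonormal, to the Frenet frame of `r₁` at `L₁`. As both curves have curvature `κ`,
it carries `r₂'(0) = T₂(0)` to `T₁(L₁) = r₁'(L₁)` and `r₂''(0) = κ N₂(0)` to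
`κ N₁(L₁) = r₁''(L₁)`. Hence `u = A ∘ r₂(· - L₁) + w`, with `u' = A ∘ r₂'(· - L₁)` and
`u'' = A ∘ r₂''(· - L₁)`, agrees with `r₁` to second order at `L₁`; and a function on `[a, c]`
whose pieces on `[a, b]` and `[b, c]` have the same one-sided derivative at `b` is differentiable
within `[a, c]` with the glued derivative. -/

open Set Metric Real

noncomputable section

/-- Points of `ℝ³` with the Euclidean norm. -/
abbrev E3 := EuclideanSpace ℝ (Fin 3)

def vec3 (x y z : ℝ) : E3 := WithLp.toLp 2 ![x, y, z]

/-- The cross product on `ℝ³`. -/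
def cross3 (u v : E3) : E3 :=
  vec3 (u 1 * v 2 - u 2 * v 1) (u 2 * v 0 - u 0 * v 2) (u 0 * v 1 - u 1 * v 0)

/-- The unit tangent `T(s) = r'(s)` of a unit-speed curve `r : [0, L] → ℝ³`. -/
def tang (f : ℝ → E3) (L s : ℝ) : E3 := derivWithin f (Icc 0 L) s

/-- The acceleration `r''(s)` of a curve `r : [0, L] → ℝ³`. -/
def acc (f : ℝ → E3) (L s : ℝ) : E3 :=
  derivWithin (fun t => derivWithin f (Icc 0 L) t) (Icc 0 L) s

/-- The principal normal `N(s) = r''(s)/‖r''(s)‖`. -/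
def nor (f : ℝ → E3) (L s : ℝ) : E3 := ‖acc f L s‖⁻¹ • acc f L s

/-- The binormal `B(s) = T(s) × N(s)`. -/
def binor (f : ℝ → E3) (L s : ℝ) : E3 := cross3 (tang f L s) (nor f L s)

/-- `f` is a C² unit-speed curve on `[0, L]` of constant curvature `κ`. -/
def IsUnitSpeedCC (f : ℝ → E3) (L κ : ℝ) : Prop :=
  ContDiffOn ℝ 2 f (Icc 0 L) ∧ (∀ s ∈ Icc 0 L, ‖tang f L s‖ = 1) ∧
    ∀ s ∈ Icc 0 L, ‖acc f L s‖ = κ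

/-- The unique rotation `A` carrying the Frenet frame of `f₂ : [0,L₂] → ℝ³` at `0`
to the Frenet frame of `f₁ : [0,L₁] → ℝ³` at `L₁`:  for orthonormal frames it is
`x ↦ ⟪x,T₂(0)⟫ T₁(L₁) + ⟪x,N₂(0)⟫ N₁(L₁) + ⟪x,B₂(0)⟫ B₁(L₁)`. -/
def frameRot (f₁ : ℝ → E3) (L₁ : ℝ) (f₂ : ℝ → E3) (L₂ : ℝ) : E3 → E3 := fun x =>
  (inner ℝ x (tang f₂ L₂ 0) : ℝ) • tang f₁ L₁ L₁ + (inner ℝ x (nor f₂ L₂ 0) : ℝ) • nor f₁ L₁ L₁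
    + (inner ℝ x (binor f₂ L₂ 0) : ℝ) • binor f₁ L₁ L₁

/-- The rotated–translated copy `u(s) = A(r₂(s − L₁)) + w`, `w = r₁(L₁) − A(r₂(0))`. -/
def rotCopy (f₁ : ℝ → E3) (L₁ : ℝ) (f₂ : ℝ → E3) (L₂ : ℝ) : ℝ → E3 := fun s =>
  frameRot f₁ L₁ f₂ L₂ (f₂ (s - L₁)) + (f₁ L₁ - frameRot f₁ L₁ f₂ L₂ (f₂ 0))

/-- The splice `r₁ * r₂ : [0, L₁ + L₂] → ℝ³`: it agrees with `r₁` on `[0, L₁]` and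
with the rotated–translated copy `u` of `r₂` on `[L₁, L₁ + L₂]`. -/
def spliceFun (f₁ : ℝ → E3) (L₁ : ℝ) (f₂ : ℝ → E3) (L₂ : ℝ) : ℝ → E3 := fun s =>
  if s ≤ L₁ then f₁ s else rotCopy f₁ L₁ f₂ L₂ s

section Gluing

variable {a b c : ℝ}

theorem eqOn_ite_le_left {α : Type*} {f₁ f₂ : ℝ → α} :
    EqOn (fun t => if t ≤ b then f₁ t else f₂ t) f₁ (Icc a b) :=
  fun _ ht => if_pos ht.2

theorem eqOn_ite_le_right {α : Type*} {f₁ f₂ : ℝ → α} (h : f₁ b = f₂ b) :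
    EqOn (fun t => if t ≤ b then f₁ t else f₂ t) f₂ (Icc b c) := by
  intro t ht
  rcases ht.1.eq_or_lt with rfl | hbt
  · simp [h]
  · exact if_neg hbt.not_ge

theorem continuousOn_ite_le {α : Type*} [TopologicalSpace α] {f₁ f₂ : ℝ → α} (hab : a ≤ b)
    (hbc : b ≤ c) (h₁ : ContinuousOn f₁ (Icc a b)) (h₂ : ContinuousOn f₂ (Icc b c))
    (h : f₁ b = f₂ b) :
    ContinuousOn (fun t => if t ≤ b then f₁ t else f₂ t) (Icc a c) := by
  rw [← Icc_union_Icc_eq_Icc hab hbc]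
  exact (h₁.congr eqOn_ite_le_left).union_of_isClosed (h₂.congr (eqOn_ite_le_right h))
    isClosed_Icc isClosed_Icc

variable {E : Type*} [NormedAddCommGroup E] [NormedSpace ℝ E]

theorem HasDerivWithinAt.union_of_isClosed {f : ℝ → E} {f' : E} {s t : Set ℝ} {x : ℝ}
    (hs : IsClosed s) (ht : IsClosed t) (hfs : x ∈ s → HasDerivWithinAt f f' s x)
    (hft : x ∈ t → HasDerivWithinAt f f' t x) : HasDerivWithinAt f f' (s ∪ t) x := by
  refine .union ?_ ?_
  · by_cases hx : x ∈ s
    · exact hfs hx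
    · exact HasFDerivWithinAt.of_notMem_closure (by rwa [hs.closure_eq])
  · by_cases hx : x ∈ t
    · exact hft hx
    · exact HasFDerivWithinAt.of_notMem_closure (by rwa [ht.closure_eq])

variable {f₁ f₂ : ℝ → E}

theorem hasDerivWithinAt_ite_le (hab : a ≤ b) (hbc : b ≤ c) {g₁ g₂ : ℝ → E}
    (h₁ : ∀ s ∈ Icc a b, HasDerivWithinAt f₁ (g₁ s) (Icc a b) s)
    (h₂ : ∀ s ∈ Icc b c, HasDerivWithinAt f₂ (g₂ s) (Icc b c) s)
    (hf : f₁ b = f₂ b) (hg : g₁ b = g₂ b) :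
    ∀ s ∈ Icc a c, HasDerivWithinAt (fun t => if t ≤ b then f₁ t else f₂ t)
      (if s ≤ b then g₁ s else g₂ s) (Icc a c) s := by
  intro s _
  rw [← Icc_union_Icc_eq_Icc hab hbc]
  refine .union_of_isClosed isClosed_Icc isClosed_Icc (fun hs => ?_) (fun hs => ?_)
  · rw [if_pos hs.2]
    exact (h₁ s hs).congr eqOn_ite_le_left (eqOn_ite_le_left hs)
  · rw [show (if s ≤ b then g₁ s else g₂ s) = g₂ s from eqOn_ite_le_right hg hs]
    exact (h₂ s hs).congr (eqOn_ite_le_right hf) (eqOn_ite_le_right hf hs)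

theorem contDiffOn_succ_of_hasDerivWithinAt {n : ℕ} {s : Set ℝ} {f f' : ℝ → E}
    (hs : UniqueDiffOn ℝ s) (hf : ∀ x ∈ s, HasDerivWithinAt f (f' x) s x)
    (hf' : ContDiffOn ℝ n f' s) : ContDiffOn ℝ (n + 1) f s :=
  (contDiffOn_succ_iff_derivWithin hs).2 ⟨fun x hx => (hf x hx).differentiableWithinAt,
    by simp, hf'.congr fun x hx => (hf x hx).derivWithin (hs x hx)⟩

end Gluing

theorem inner_eq_zero_of_hasDerivWithinAt_of_norm_eq_one {F : Type*} [NormedAddCommGroup F]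
    [InnerProductSpace ℝ F] {f : ℝ → F} {f' : F} {s : Set ℝ} {x : ℝ}
    (hf : HasDerivWithinAt f f' s x) (hx : x ∈ s) (hs : UniqueDiffWithinAt ℝ s x)
    (hnorm : ∀ t ∈ s, ‖f t‖ = 1) : inner ℝ (f x) f' = 0 := by
  have hconst : HasDerivWithinAt (‖f ·‖ ^ 2) 0 s x :=
    (hasDerivWithinAt_const x s 1).congr (fun t ht => by simp [hnorm t ht]) (by simp [hnorm x hx])
  have := hs.eq_deriv _ hf.norm_sq hconst
  linarith

theorem inner_cross3_left (u v : E3) : inner ℝ (cross3 u v) u = 0 := by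
  simp only [cross3, vec3, PiLp.inner_apply, RCLike.inner_apply, Fin.sum_univ_three,
    conj_trivial, Matrix.cons_val_zero, Matrix.cons_val_one, Matrix.cons_val_two,
    Matrix.head_cons, Matrix.tail_cons]
  ring

theorem inner_cross3_right (u v : E3) : inner ℝ (cross3 u v) v = 0 := by
  simp only [cross3, vec3, PiLp.inner_apply, RCLike.inner_apply, Fin.sum_univ_three,
    conj_trivial, Matrix.cons_val_zero, Matrix.cons_val_one, Matrix.cons_val_two,
    Matrix.head_cons, Matrix.tail_cons]
  ring

theorem inner_cross3_self (u v : E3) :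
    inner ℝ (cross3 u v) (cross3 u v) = inner ℝ u u * inner ℝ v v - inner ℝ u v ^ 2 := by
  simp only [cross3, vec3, PiLp.inner_apply, RCLike.inner_apply, Fin.sum_univ_three,
    conj_trivial, Matrix.cons_val_zero, Matrix.cons_val_one, Matrix.cons_val_two,
    Matrix.head_cons, Matrix.tail_cons]
  ring

theorem mapsTo_sub_const_Icc {c L : ℝ} : MapsTo (· - c) (Icc c (c + L)) (Icc 0 L) :=
  fun _ ht => ⟨by linarith [ht.1], by linarith [ht.2]⟩

theorem ContinuousLinearMap.hasDerivWithinAt_comp_sub {E F : Type*} [NormedAddCommGroup E]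
    [NormedSpace ℝ E] [NormedAddCommGroup F] [NormedSpace ℝ F] (A : E →L[ℝ] F)
    {γ γ' : ℝ → E} {c L : ℝ} (hγ : ∀ t ∈ Icc 0 L, HasDerivWithinAt γ (γ' t) (Icc 0 L) t) :
    ∀ s ∈ Icc c (c + L),
      HasDerivWithinAt (fun s => A (γ (s - c))) (A (γ' (s - c))) (Icc c (c + L)) s := by
  intro s hs
  have hshift := (hγ _ (mapsTo_sub_const_Icc hs)).scomp s ((hasDerivWithinAt_id s _).sub_const c)
    mapsTo_sub_const_Icc
  rw [one_smul] at hshift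
  exact A.hasFDerivAt.comp_hasDerivWithinAt s hshift

def frenetFrame (f : ℝ → E3) (L s : ℝ) : Fin 3 → E3 := ![tang f L s, nor f L s, binor f L s]

theorem acc_eq_norm_smul_nor (f : ℝ → E3) (L s : ℝ) : acc f L s = ‖acc f L s‖ • nor f L s := by
  rcases eq_or_ne (acc f L s) 0 with h | h
  · simp [nor, h]
  · rw [nor, smul_smul, mul_inv_cancel₀ (norm_ne_zero_iff.2 h), one_smul]

namespace IsUnitSpeedCC

variable {f : ℝ → E3} {L κ : ℝ}

theorem hasDerivWithinAt_tang (hf : IsUnitSpeedCC f L κ) :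
    ∀ s ∈ Icc 0 L, HasDerivWithinAt f (tang f L s) (Icc 0 L) s :=
  fun s hs => (hf.1.differentiableOn (by norm_num) s hs).hasDerivWithinAt

theorem contDiffOn_tang (hf : IsUnitSpeedCC f L κ) (hL : 0 < L) :
    ContDiffOn ℝ 1 (tang f L) (Icc 0 L) :=
  hf.1.derivWithin (uniqueDiffOn_Icc hL) (by norm_num)

theorem hasDerivWithinAt_acc (hf : IsUnitSpeedCC f L κ) (hL : 0 < L) :
    ∀ s ∈ Icc 0 L, HasDerivWithinAt (tang f L) (acc f L s) (Icc 0 L) s :=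
  fun s hs => ((hf.contDiffOn_tang hL).differentiableOn one_ne_zero s hs).hasDerivWithinAt

theorem continuousOn_acc (hf : IsUnitSpeedCC f L κ) (hL : 0 < L) :
    ContinuousOn (acc f L) (Icc 0 L) :=
  (hf.contDiffOn_tang hL).continuousOn_derivWithin (uniqueDiffOn_Icc hL) le_rfl

theorem inner_tang_acc (hf : IsUnitSpeedCC f L κ) (hL : 0 < L) {s : ℝ} (hs : s ∈ Icc 0 L) :
    inner ℝ (tang f L s) (acc f L s) = 0 :=
  inner_eq_zero_of_hasDerivWithinAt_of_norm_eq_one (hf.hasDerivWithinAt_acc hL s hs) hs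
    (uniqueDiffOn_Icc hL s hs) hf.2.1

theorem acc_eq_smul_nor (hf : IsUnitSpeedCC f L κ) {s : ℝ} (hs : s ∈ Icc 0 L) :
    acc f L s = κ • nor f L s := by
  rw [← hf.2.2 s hs]
  exact acc_eq_norm_smul_nor f L s

theorem orthonormal_frenetFrame (hf : IsUnitSpeedCC f L κ) (hL : 0 < L) (hκ : κ ≠ 0)
    {s : ℝ} (hs : s ∈ Icc 0 L) : Orthonormal ℝ (frenetFrame f L s) := by
  have hT : ‖tang f L s‖ = 1 := hf.2.1 s hs
  have hN : ‖nor f L s‖ = 1 := by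
    rw [nor, norm_smul, norm_inv, norm_norm, hf.2.2 s hs, inv_mul_cancel₀ hκ]
  have hTN : inner ℝ (tang f L s) (nor f L s) = 0 := by
    rw [nor, real_inner_smul_right, hf.inner_tang_acc hL hs, mul_zero]
  have hBT : inner ℝ (binor f L s) (tang f L s) = 0 := inner_cross3_left _ _
  have hBN : inner ℝ (binor f L s) (nor f L s) = 0 := inner_cross3_right _ _
  have hB : ‖binor f L s‖ = 1 := by
    rw [norm_eq_sqrt_real_inner, binor, inner_cross3_self, real_inner_self_eq_norm_sq,
      real_inner_self_eq_norm_sq, hT, hN, hTN]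
    norm_num
  rw [orthonormal_iff_ite]
  intro i j
  fin_cases i <;> fin_cases j <;>
    simp [frenetFrame, hT, hN, hB, hTN, hBT, hBN, real_inner_comm (tang f L s),
      real_inner_comm (binor f L s)]

end IsUnitSpeedCC

section Splice

variable {f₁ f₂ : ℝ → E3} {L₁ L₂ κ : ℝ}

def frameRotCLM (f₁ : ℝ → E3) (L₁ : ℝ) (f₂ : ℝ → E3) (L₂ : ℝ) : E3 →L[ℝ] E3 :=
  ∑ i, (innerSL ℝ (frenetFrame f₂ L₂ 0 i)).smulRight (frenetFrame f₁ L₁ L₁ i)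

theorem coe_frameRotCLM : ⇑(frameRotCLM f₁ L₁ f₂ L₂) = frameRot f₁ L₁ f₂ L₂ := by
  ext x : 1
  simp [frameRotCLM, frameRot, frenetFrame, Fin.sum_univ_three, real_inner_comm x]

theorem frameRotCLM_frenetFrame (h : Orthonormal ℝ (frenetFrame f₂ L₂ 0)) (j : Fin 3) :
    frameRotCLM f₁ L₁ f₂ L₂ (frenetFrame f₂ L₂ 0 j) = frenetFrame f₁ L₁ L₁ j := by
  simp [frameRotCLM, orthonormal_iff_ite.1 h]

theorem rotCopy_eq : rotCopy f₁ L₁ f₂ L₂ = fun s =>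
    frameRotCLM f₁ L₁ f₂ L₂ (f₂ (s - L₁)) + (f₁ L₁ - frameRotCLM f₁ L₁ f₂ L₂ (f₂ 0)) := by
  rw [coe_frameRotCLM]
  rfl

theorem rotCopy_self : rotCopy f₁ L₁ f₂ L₂ L₁ = f₁ L₁ := by
  simp [rotCopy]

theorem frameRotCLM_tang (h₂ : IsUnitSpeedCC f₂ L₂ κ) (hL₂ : 0 < L₂) (hκ : κ ≠ 0) :
    frameRotCLM f₁ L₁ f₂ L₂ (tang f₂ L₂ 0) = tang f₁ L₁ L₁ :=
  frameRotCLM_frenetFrame (h₂.orthonormal_frenetFrame hL₂ hκ ⟨le_rfl, hL₂.le⟩) 0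

theorem frameRotCLM_acc (h₁ : IsUnitSpeedCC f₁ L₁ κ) (hL₁ : 0 ≤ L₁) (h₂ : IsUnitSpeedCC f₂ L₂ κ)
    (hL₂ : 0 < L₂) (hκ : κ ≠ 0) : frameRotCLM f₁ L₁ f₂ L₂ (acc f₂ L₂ 0) = acc f₁ L₁ L₁ := by
  rw [h₂.acc_eq_smul_nor ⟨le_rfl, hL₂.le⟩, h₁.acc_eq_smul_nor ⟨hL₁, le_rfl⟩, map_smul]
  congr 1
  exact frameRotCLM_frenetFrame (h₂.orthonormal_frenetFrame hL₂ hκ ⟨le_rfl, hL₂.le⟩) 1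

theorem hasDerivWithinAt_rotCopy (h₂ : IsUnitSpeedCC f₂ L₂ κ) :
    ∀ s ∈ Icc L₁ (L₁ + L₂), HasDerivWithinAt (rotCopy f₁ L₁ f₂ L₂)
      (frameRotCLM f₁ L₁ f₂ L₂ (tang f₂ L₂ (s - L₁))) (Icc L₁ (L₁ + L₂)) s := by
  rw [rotCopy_eq]
  exact fun s hs =>
    ((frameRotCLM f₁ L₁ f₂ L₂).hasDerivWithinAt_comp_sub h₂.hasDerivWithinAt_tang s hs).add_const _

theorem hasDerivWithinAt_tang_rotCopy (h₂ : IsUnitSpeedCC f₂ L₂ κ) (hL₂ : 0 < L₂) :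
    ∀ s ∈ Icc L₁ (L₁ + L₂),
      HasDerivWithinAt (fun s => frameRotCLM f₁ L₁ f₂ L₂ (tang f₂ L₂ (s - L₁)))
        (frameRotCLM f₁ L₁ f₂ L₂ (acc f₂ L₂ (s - L₁))) (Icc L₁ (L₁ + L₂)) s :=
  (frameRotCLM f₁ L₁ f₂ L₂).hasDerivWithinAt_comp_sub (h₂.hasDerivWithinAt_acc hL₂)

theorem derivWithin_derivWithin_rotCopy (h₂ : IsUnitSpeedCC f₂ L₂ κ) (hL₂ : 0 < L₂) :
    ∀ s ∈ Icc L₁ (L₁ + L₂),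
      derivWithin (derivWithin (rotCopy f₁ L₁ f₂ L₂) (Icc L₁ (L₁ + L₂))) (Icc L₁ (L₁ + L₂)) s
        = frameRotCLM f₁ L₁ f₂ L₂ (acc f₂ L₂ (s - L₁)) := by
  have hI : UniqueDiffOn ℝ (Icc L₁ (L₁ + L₂)) := uniqueDiffOn_Icc (by linarith)
  intro s hs
  rw [derivWithin_congr (fun t ht => (hasDerivWithinAt_rotCopy h₂ t ht).derivWithin (hI t ht))
    ((hasDerivWithinAt_rotCopy h₂ s hs).derivWithin (hI s hs))]
  exact (hasDerivWithinAt_tang_rotCopy h₂ hL₂ s hs).derivWithin (hI s hs)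

theorem continuousOn_acc_rotCopy (h₂ : IsUnitSpeedCC f₂ L₂ κ) (hL₂ : 0 < L₂) :
    ContinuousOn (fun s => frameRotCLM f₁ L₁ f₂ L₂ (acc f₂ L₂ (s - L₁))) (Icc L₁ (L₁ + L₂)) :=
  (frameRotCLM f₁ L₁ f₂ L₂).continuous.comp_continuousOn
    ((h₂.continuousOn_acc hL₂).comp (by fun_prop) mapsTo_sub_const_Icc)

end Splice

/-- with the notation of the splicing construction, `u''(L₁) = r₁''(L₁)`;
consequently the spliced curve `r : [0, L₁+L₂] → ℝ³` is C². -/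
theorem splice_C2 (r₁ r₂ : ℝ → E3) (L₁ L₂ κ : ℝ)
    (hL₁ : 0 < L₁) (hL₂ : 0 < L₂) (hκ : 0 < κ)
    (h₁ : IsUnitSpeedCC r₁ L₁ κ) (h₂ : IsUnitSpeedCC r₂ L₂ κ) :
    derivWithin (fun t => derivWithin (rotCopy r₁ L₁ r₂ L₂) (Icc L₁ (L₁ + L₂)) t)
        (Icc L₁ (L₁ + L₂)) L₁
      = derivWithin (fun t => derivWithin r₁ (Icc 0 L₁) t) (Icc 0 L₁) L₁ ∧
    ContDiffOn ℝ 2 (spliceFun r₁ L₁ r₂ L₂) (Icc 0 (L₁ + L₂)) := by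
  have hL : L₁ ≤ L₁ + L₂ := by linarith
  have hT : tang r₁ L₁ L₁ = frameRotCLM r₁ L₁ r₂ L₂ (tang r₂ L₂ (L₁ - L₁)) := by
    rw [sub_self, frameRotCLM_tang h₂ hL₂ hκ.ne']
  have hK : acc r₁ L₁ L₁ = frameRotCLM r₁ L₁ r₂ L₂ (acc r₂ L₂ (L₁ - L₁)) := by
    rw [sub_self, frameRotCLM_acc h₁ hL₁.le h₂ hL₂ hκ.ne']
  refine ⟨(derivWithin_derivWithin_rotCopy h₂ hL₂ L₁ ⟨le_rfl, hL⟩).trans hK.symm, ?_⟩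
  have hderiv := hasDerivWithinAt_ite_le hL₁.le hL h₁.hasDerivWithinAt_tang
    (hasDerivWithinAt_rotCopy h₂) rotCopy_self.symm hT
  have hderiv2 := hasDerivWithinAt_ite_le hL₁.le hL (h₁.hasDerivWithinAt_acc hL₁)
    (hasDerivWithinAt_tang_rotCopy h₂ hL₂) hT hK
  have hacc := continuousOn_ite_le hL₁.le hL (h₁.continuousOn_acc hL₁)
    (continuousOn_acc_rotCopy h₂ hL₂) hK
  have hI : UniqueDiffOn ℝ (Icc 0 (L₁ + L₂)) := uniqueDiffOn_Icc (by linarith)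
  exact contDiffOn_succ_of_hasDerivWithinAt (n := 1) hI hderiv
    (contDiffOn_succ_of_hasDerivWithinAt (n := 0) hI hderiv2 (contDiffOn_zero.2 hacc))
end
end

section
/- The spliced curve r : [0, L₁+L₂] → ℝ³ is a C² unit-speed curve of constant curvature κ: for all s ∈ [0, L₁+L₂] one has ‖r''(s)‖ = κ; explicitly, r''(s) = κ·N₁(s) for s ∈ [0, L₁] and r''(s) = κ·A(N₂(s − L₁)) for s ∈ [L₁, L₁+L₂]. -/
open Set Metric Real

noncomputable section

lemma inner_e3 (u v : E3) : (inner ℝ u v : ℝ) = u 0 * v 0 + u 1 * v 1 + u 2 * v 2 := by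
  simp [PiLp.inner_apply, Fin.sum_univ_three]
  ring

lemma vec3_zero (x y z : ℝ) : vec3 x y z 0 = x := rfl
lemma vec3_one (x y z : ℝ) : vec3 x y z 1 = y := rfl
lemma vec3_two (x y z : ℝ) : vec3 x y z 2 = z := rfl

lemma gram3 (x T N : E3) (hT : (inner ℝ T T : ℝ) = 1) (hN : (inner ℝ N N : ℝ) = 1)
    (hTN : (inner ℝ T N : ℝ) = 0) :
    (inner ℝ x T : ℝ)^2 + (inner ℝ x N : ℝ)^2 + (inner ℝ x (cross3 T N) : ℝ)^2 = (inner ℝ x x : ℝ) := by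
  simp only [inner_e3, cross3, vec3_zero, vec3_one, vec3_two] at *
  linear_combination ((x 0^2 + x 1^2 + x 2^2) * (N 0*N 0 + N 1*N 1 + N 2*N 2)
      - (x 0*N 0 + x 1*N 1 + x 2*N 2)^2) * hT
    + ((x 0^2 + x 1^2 + x 2^2) - (x 0*T 0 + x 1*T 1 + x 2*T 2)^2) * hN
    + (2*(x 0*T 0 + x 1*T 1 + x 2*T 2)*(x 0*N 0 + x 1*N 1 + x 2*N 2)
      - (x 0^2 + x 1^2 + x 2^2)*(T 0*N 0 + T 1*N 1 + T 2*N 2)) * hTN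

lemma cross3_inner_left (T N : E3) : (inner ℝ (cross3 T N) T : ℝ) = 0 := by
  simp only [inner_e3, cross3, vec3_zero, vec3_one, vec3_two]; ring

lemma cross3_inner_right (T N : E3) : (inner ℝ (cross3 T N) N : ℝ) = 0 := by
  simp only [inner_e3, cross3, vec3_zero, vec3_one, vec3_two]; ring

lemma cross3_inner_self (T N : E3) :
    (inner ℝ (cross3 T N) (cross3 T N) : ℝ)
      = (inner ℝ T T : ℝ) * (inner ℝ N N : ℝ) - (inner ℝ T N : ℝ)^2 := by
  simp only [inner_e3, cross3, vec3_zero, vec3_one, vec3_two]; ring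

lemma hasDeriv_tang {f : ℝ → E3} {L κ : ℝ} (h : IsUnitSpeedCC f L κ) :
    ∀ s ∈ Icc (0:ℝ) L, HasDerivWithinAt f (tang f L s) (Icc 0 L) s :=
  fun s hs => ((h.1.differentiableOn (by norm_num)) s hs).hasDerivWithinAt

lemma contDiffOn_tang {f : ℝ → E3} {L κ : ℝ} (hL : 0 < L) (h : IsUnitSpeedCC f L κ) :
    ContDiffOn ℝ 1 (tang f L) (Icc 0 L) :=
  h.1.derivWithin (uniqueDiffOn_Icc hL) (by norm_num)

lemma hasDeriv_acc {f : ℝ → E3} {L κ : ℝ} (hL : 0 < L) (h : IsUnitSpeedCC f L κ) :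
    ∀ s ∈ Icc (0:ℝ) L, HasDerivWithinAt (tang f L) (acc f L s) (Icc 0 L) s :=
  fun s hs => (((contDiffOn_tang hL h).differentiableOn one_ne_zero) s hs).hasDerivWithinAt

lemma contOn_acc {f : ℝ → E3} {L κ : ℝ} (hL : 0 < L) (h : IsUnitSpeedCC f L κ) :
    ContinuousOn (acc f L) (Icc 0 L) :=
  ((contDiffOn_tang hL h).derivWithin (m := 0) (uniqueDiffOn_Icc hL) (by norm_num)).continuousOn

lemma inner_tang_acc {f : ℝ → E3} {L κ : ℝ} (hL : 0 < L) (h : IsUnitSpeedCC f L κ) :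
    ∀ s ∈ Icc (0:ℝ) L, (inner ℝ (tang f L s) (acc f L s) : ℝ) = 0 := by
  intro s hs
  have hT := hasDeriv_acc hL h
  have hg : ∀ t ∈ Icc (0:ℝ) L, (inner ℝ (tang f L t) (tang f L t) : ℝ) = 1 := by
    intro t ht
    rw [real_inner_self_eq_norm_sq, h.2.1 t ht]; norm_num
  have h1 : HasDerivWithinAt (fun t => (inner ℝ (tang f L t) (tang f L t) : ℝ))
      ((inner ℝ (tang f L s) (acc f L s) : ℝ) + (inner ℝ (acc f L s) (tang f L s) : ℝ))
      (Icc 0 L) s := (hT s hs).inner ℝ (hT s hs)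
  have h2 : HasDerivWithinAt (fun t => (inner ℝ (tang f L t) (tang f L t) : ℝ)) 0 (Icc 0 L) s :=
    (hasDerivWithinAt_const s _ (1:ℝ)).congr hg (hg s hs)
  have := h1.derivWithin (uniqueDiffOn_Icc hL s hs)
  rw [h2.derivWithin (uniqueDiffOn_Icc hL s hs)] at this
  have hsymm : (inner ℝ (acc f L s) (tang f L s) : ℝ) = (inner ℝ (tang f L s) (acc f L s) : ℝ) :=
    real_inner_comm _ _
  linarith

section frames
variable {f : ℝ → E3} {L κ : ℝ}

lemma inner_tt (h : IsUnitSpeedCC f L κ) {s : ℝ} (hs : s ∈ Icc (0:ℝ) L) :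
    (inner ℝ (tang f L s) (tang f L s) : ℝ) = 1 := by
  rw [real_inner_self_eq_norm_sq, h.2.1 s hs]; norm_num

lemma inner_nn (hκ : 0 < κ) (h : IsUnitSpeedCC f L κ) {s : ℝ} (hs : s ∈ Icc (0:ℝ) L) :
    (inner ℝ (nor f L s) (nor f L s) : ℝ) = 1 := by
  rw [real_inner_self_eq_norm_sq]
  unfold nor
  rw [norm_smul, h.2.2 s hs, norm_inv, Real.norm_eq_abs, abs_of_pos hκ,
    inv_mul_cancel₀ hκ.ne']
  norm_num

lemma inner_tn (hL : 0 < L) (h : IsUnitSpeedCC f L κ) {s : ℝ} (hs : s ∈ Icc (0:ℝ) L) :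
    (inner ℝ (tang f L s) (nor f L s) : ℝ) = 0 := by
  unfold nor
  rw [real_inner_smul_right, inner_tang_acc hL h s hs]; ring

lemma inner_tb : (inner ℝ (tang f L s) (binor f L s) : ℝ) = 0 := by
  rw [real_inner_comm]; exact cross3_inner_left _ _

lemma inner_nb : (inner ℝ (nor f L s) (binor f L s) : ℝ) = 0 := by
  rw [real_inner_comm]; exact cross3_inner_right _ _

lemma inner_bb (hL : 0 < L) (hκ : 0 < κ) (h : IsUnitSpeedCC f L κ) {s : ℝ}
    (hs : s ∈ Icc (0:ℝ) L) : (inner ℝ (binor f L s) (binor f L s) : ℝ) = 1 := by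
  show (inner ℝ (cross3 (tang f L s) (nor f L s)) (cross3 (tang f L s) (nor f L s)) : ℝ) = 1
  rw [cross3_inner_self, inner_tt h hs, inner_nn hκ h hs, inner_tn hL h hs]; ring

lemma acc_eq_smul_nor (hκ : 0 < κ) (h : IsUnitSpeedCC f L κ) {s : ℝ} (hs : s ∈ Icc (0:ℝ) L) :
    acc f L s = κ • nor f L s := by
  unfold nor
  rw [h.2.2 s hs, smul_smul, mul_inv_cancel₀ hκ.ne', one_smul]

end frames

def rotCLM (f₁ : ℝ → E3) (L₁ : ℝ) (f₂ : ℝ → E3) (L₂ : ℝ) : E3 →L[ℝ] E3 :=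
  ((innerSL ℝ (tang f₂ L₂ 0)).smulRight (tang f₁ L₁ L₁))
  + ((innerSL ℝ (nor f₂ L₂ 0)).smulRight (nor f₁ L₁ L₁))
  + ((innerSL ℝ (binor f₂ L₂ 0)).smulRight (binor f₁ L₁ L₁))

lemma rotCLM_apply (f₁ : ℝ → E3) (L₁ : ℝ) (f₂ : ℝ → E3) (L₂ : ℝ) (x : E3) :
    rotCLM f₁ L₁ f₂ L₂ x = (inner ℝ (tang f₂ L₂ 0) x : ℝ) • tang f₁ L₁ L₁
      + (inner ℝ (nor f₂ L₂ 0) x : ℝ) • nor f₁ L₁ L₁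
      + (inner ℝ (binor f₂ L₂ 0) x : ℝ) • binor f₁ L₁ L₁ := by
  simp [rotCLM]

lemma frameRot_eq_rotCLM (f₁ : ℝ → E3) (L₁ : ℝ) (f₂ : ℝ → E3) (L₂ : ℝ) :
    frameRot f₁ L₁ f₂ L₂ = ⇑(rotCLM f₁ L₁ f₂ L₂) := by
  funext x
  rw [rotCLM_apply]
  unfold frameRot
  rw [real_inner_comm x (tang f₂ L₂ 0), real_inner_comm x (nor f₂ L₂ 0),
    real_inner_comm x (binor f₂ L₂ 0)]

lemma inner_comb (a b c : ℝ) (T N B : E3) (hT : (inner ℝ T T : ℝ) = 1)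
    (hN : (inner ℝ N N : ℝ) = 1) (hB : (inner ℝ B B : ℝ) = 1)
    (hTN : (inner ℝ T N : ℝ) = 0) (hTB : (inner ℝ T B : ℝ) = 0) (hNB : (inner ℝ N B : ℝ) = 0) :
    (inner ℝ (a • T + b • N + c • B) (a • T + b • N + c • B) : ℝ) = a^2 + b^2 + c^2 := by
  have hNT : (inner ℝ N T : ℝ) = 0 := by rw [real_inner_comm]; exact hTN
  have hBT : (inner ℝ B T : ℝ) = 0 := by rw [real_inner_comm]; exact hTB
  have hBN : (inner ℝ B N : ℝ) = 0 := by rw [real_inner_comm]; exact hNB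
  simp only [inner_add_left, inner_add_right, real_inner_smul_left, real_inner_smul_right]
  rw [hT, hN, hB, hTN, hTB, hNB, hNT, hBT, hBN]
  ring

section rot
variable {r₁ r₂ : ℝ → E3} {L₁ L₂ κ : ℝ}

lemma rotCLM_norm (hL₁ : 0 < L₁) (hL₂ : 0 < L₂) (hκ : 0 < κ)
    (h₁ : IsUnitSpeedCC r₁ L₁ κ) (h₂ : IsUnitSpeedCC r₂ L₂ κ) (x : E3) :
    ‖rotCLM r₁ L₁ r₂ L₂ x‖ = ‖x‖ := by
  have hm₁ : L₁ ∈ Icc (0:ℝ) L₁ := right_mem_Icc.2 hL₁.le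
  have hm₂ : (0:ℝ) ∈ Icc (0:ℝ) L₂ := left_mem_Icc.2 hL₂.le
  have hsq : ‖rotCLM r₁ L₁ r₂ L₂ x‖^2 = ‖x‖^2 := by
    rw [← real_inner_self_eq_norm_sq, ← real_inner_self_eq_norm_sq, rotCLM_apply,
      inner_comb _ _ _ _ _ _ (inner_tt h₁ hm₁) (inner_nn hκ h₁ hm₁) (inner_bb hL₁ hκ h₁ hm₁)
        (inner_tn hL₁ h₁ hm₁) inner_tb inner_nb]
    have hg := gram3 x (tang r₂ L₂ 0) (nor r₂ L₂ 0) (inner_tt h₂ hm₂) (inner_nn hκ h₂ hm₂)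
      (inner_tn hL₂ h₂ hm₂)
    have hb : cross3 (tang r₂ L₂ 0) (nor r₂ L₂ 0) = binor r₂ L₂ 0 := rfl
    rw [hb, real_inner_comm (tang r₂ L₂ 0) x, real_inner_comm (nor r₂ L₂ 0) x,
      real_inner_comm (binor r₂ L₂ 0) x] at hg
    exact hg
  have h1 := norm_nonneg (rotCLM r₁ L₁ r₂ L₂ x)
  have h2 := norm_nonneg x
  nlinarith [hsq]

lemma rotCLM_tang (hL₁ : 0 < L₁) (hL₂ : 0 < L₂) (hκ : 0 < κ)
    (h₁ : IsUnitSpeedCC r₁ L₁ κ) (h₂ : IsUnitSpeedCC r₂ L₂ κ) :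
    rotCLM r₁ L₁ r₂ L₂ (tang r₂ L₂ 0) = tang r₁ L₁ L₁ := by
  have hm₂ : (0:ℝ) ∈ Icc (0:ℝ) L₂ := left_mem_Icc.2 hL₂.le
  rw [rotCLM_apply, inner_tt h₂ hm₂,
    show (inner ℝ (nor r₂ L₂ 0) (tang r₂ L₂ 0) : ℝ) = 0 by
      rw [real_inner_comm]; exact inner_tn hL₂ h₂ hm₂,
    show (inner ℝ (binor r₂ L₂ 0) (tang r₂ L₂ 0) : ℝ) = 0 by
      rw [real_inner_comm]; exact inner_tb]
  simp

lemma rotCLM_nor (hL₁ : 0 < L₁) (hL₂ : 0 < L₂) (hκ : 0 < κ)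
    (h₁ : IsUnitSpeedCC r₁ L₁ κ) (h₂ : IsUnitSpeedCC r₂ L₂ κ) :
    rotCLM r₁ L₁ r₂ L₂ (nor r₂ L₂ 0) = nor r₁ L₁ L₁ := by
  have hm₂ : (0:ℝ) ∈ Icc (0:ℝ) L₂ := left_mem_Icc.2 hL₂.le
  rw [rotCLM_apply, inner_tn hL₂ h₂ hm₂, inner_nn hκ h₂ hm₂,
    show (inner ℝ (binor r₂ L₂ 0) (nor r₂ L₂ 0) : ℝ) = 0 by
      rw [real_inner_comm]; exact inner_nb]
  simp

lemma rotCLM_acc (hL₁ : 0 < L₁) (hL₂ : 0 < L₂) (hκ : 0 < κ)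
    (h₁ : IsUnitSpeedCC r₁ L₁ κ) (h₂ : IsUnitSpeedCC r₂ L₂ κ) :
    rotCLM r₁ L₁ r₂ L₂ (acc r₂ L₂ 0) = acc r₁ L₁ L₁ := by
  rw [acc_eq_smul_nor hκ h₂ (left_mem_Icc.2 hL₂.le), map_smul,
    rotCLM_nor hL₁ hL₂ hκ h₁ h₂, ← acc_eq_smul_nor hκ h₁ (right_mem_Icc.2 hL₁.le)]

end rot

lemma hasDerivWithinAt_glue {f : ℝ → E3} {v : E3} {a b c x : ℝ}
    (h1 : x ∈ Icc a b → HasDerivWithinAt f v (Icc a b) x)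
    (h2 : x ∈ Icc b c → HasDerivWithinAt f v (Icc b c) x)
    (hx : x ∈ Icc a b ∪ Icc b c) :
    HasDerivWithinAt f v (Icc a b ∪ Icc b c) x := by
  by_cases hx1 : x ∈ Icc a b <;> by_cases hx2 : x ∈ Icc b c
  · exact (h1 hx1).union (h2 hx2)
  · have hcl : x ∉ closure (Icc b c) := by rwa [isClosed_Icc.closure_eq]
    have htriv : HasDerivWithinAt f v (Icc b c) x :=
      hasDerivWithinAt_iff_hasFDerivWithinAt.mpr (HasFDerivWithinAt.of_notMem_closure hcl)
    exact (h1 hx1).union htriv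
  · have hcl : x ∉ closure (Icc a b) := by rwa [isClosed_Icc.closure_eq]
    have htriv : HasDerivWithinAt f v (Icc a b) x :=
      hasDerivWithinAt_iff_hasFDerivWithinAt.mpr (HasFDerivWithinAt.of_notMem_closure hcl)
    exact htriv.union (h2 hx2)
  · exact absurd hx (by simp [hx1, hx2])

lemma continuousOn_glue {f : ℝ → E3} {a b c : ℝ}
    (h1 : ContinuousOn f (Icc a b)) (h2 : ContinuousOn f (Icc b c)) :
    ContinuousOn f (Icc a b ∪ Icc b c) := by
  intro x hx
  by_cases hx1 : x ∈ Icc a b <;> by_cases hx2 : x ∈ Icc b c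
  · exact (h1 x hx1).union (h2 x hx2)
  · have hcl : x ∉ closure (Icc b c) := by rwa [isClosed_Icc.closure_eq]
    exact (h1 x hx1).union (continuousWithinAt_of_notMem_closure hcl)
  · have hcl : x ∉ closure (Icc a b) := by rwa [isClosed_Icc.closure_eq]
    exact (continuousWithinAt_of_notMem_closure hcl).union (h2 x hx2)
  · exact absurd hx (by simp [hx1, hx2])

/-- the spliced curve `r : [0, L₁+L₂] → ℝ³` is a C² unit-speed curve of
constant curvature `κ`; explicitly `r''(s) = κ·N₁(s)` on `[0, L₁]` and
`r''(s) = κ·A(N₂(s − L₁))` on `[L₁, L₁+L₂]`. -/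
theorem splice_constant_curvature (r₁ r₂ : ℝ → E3) (L₁ L₂ κ : ℝ)
    (hL₁ : 0 < L₁) (hL₂ : 0 < L₂) (hκ : 0 < κ)
    (h₁ : IsUnitSpeedCC r₁ L₁ κ) (h₂ : IsUnitSpeedCC r₂ L₂ κ) :
    IsUnitSpeedCC (spliceFun r₁ L₁ r₂ L₂) (L₁ + L₂) κ ∧
    (∀ s ∈ Icc 0 L₁,
      acc (spliceFun r₁ L₁ r₂ L₂) (L₁ + L₂) s = κ • nor r₁ L₁ s) ∧
    (∀ s ∈ Icc L₁ (L₁ + L₂),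
      acc (spliceFun r₁ L₁ r₂ L₂) (L₁ + L₂) s
        = κ • frameRot r₁ L₁ r₂ L₂ (nor r₂ L₂ (s - L₁))) := by
  set A := rotCLM r₁ L₁ r₂ L₂ with hA
  have hJ : Icc (0:ℝ) L₁ ∪ Icc L₁ (L₁+L₂) = Icc 0 (L₁+L₂) :=
    Icc_union_Icc_eq_Icc hL₁.le (by linarith)
  have hudJ : UniqueDiffOn ℝ (Icc (0:ℝ) (L₁+L₂)) := uniqueDiffOn_Icc (by linarith)
  have hmap : MapsTo (fun t => t - L₁) (Icc L₁ (L₁+L₂)) (Icc 0 L₂) := by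
    intro t ht
    simp only [mem_Icc] at ht ⊢
    constructor <;> linarith
  set F := spliceFun r₁ L₁ r₂ L₂ with hFdef
  set Tf : ℝ → E3 := fun s => if s ≤ L₁ then tang r₁ L₁ s else A (tang r₂ L₂ (s - L₁))
    with hTfdef
  set Af : ℝ → E3 := fun s => if s ≤ L₁ then acc r₁ L₁ s else A (acc r₂ L₂ (s - L₁))
    with hAfdef
  have hF1 : EqOn F r₁ (Icc 0 L₁) := fun s hs => if_pos hs.2
  have hrotL : rotCopy r₁ L₁ r₂ L₂ L₁ = r₁ L₁ := by
    unfold rotCopy; rw [sub_self]; abel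
  have hF2 : EqOn F (rotCopy r₁ L₁ r₂ L₂) (Icc L₁ (L₁+L₂)) := by
    intro s hs
    by_cases h : s ≤ L₁
    · have hsl : s = L₁ := le_antisymm h hs.1
      subst hsl
      rw [hrotL]
      exact if_pos le_rfl
    · exact if_neg h
  have hrot_eq : ∀ s, rotCopy r₁ L₁ r₂ L₂ s = A (r₂ (s - L₁)) + (r₁ L₁ - A (r₂ 0)) := by
    intro s; unfold rotCopy; rw [frameRot_eq_rotCLM]
  have hD₂ := hasDeriv_tang h₂
  have hD₂' := hasDeriv_acc hL₂ h₂
  have hu : ∀ s ∈ Icc L₁ (L₁+L₂), HasDerivWithinAt (rotCopy r₁ L₁ r₂ L₂)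
      (A (tang r₂ L₂ (s - L₁))) (Icc L₁ (L₁+L₂)) s := by
    intro s hs
    have hshift : HasDerivWithinAt (fun t => t - L₁) 1 (Icc L₁ (L₁+L₂)) s :=
      ((hasDerivAt_id s).sub_const L₁).hasDerivWithinAt
    have h1 : HasDerivWithinAt (fun t => r₂ (t - L₁)) ((1:ℝ) • tang r₂ L₂ (s - L₁))
        (Icc L₁ (L₁+L₂)) s :=
      HasDerivWithinAt.scomp_of_eq s (hD₂ _ (hmap hs)) hshift hmap rfl
    rw [one_smul] at h1
    have h2 := A.hasFDerivAt.comp_hasDerivWithinAt s h1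
    have h3 := h2.add_const (r₁ L₁ - A (r₂ 0))
    exact h3.congr (fun y _ => hrot_eq y) (hrot_eq s)
  have hu' : ∀ s ∈ Icc L₁ (L₁+L₂), HasDerivWithinAt (fun t => A (tang r₂ L₂ (t - L₁)))
      (A (acc r₂ L₂ (s - L₁))) (Icc L₁ (L₁+L₂)) s := by
    intro s hs
    have hshift : HasDerivWithinAt (fun t => t - L₁) 1 (Icc L₁ (L₁+L₂)) s :=
      ((hasDerivAt_id s).sub_const L₁).hasDerivWithinAt
    have h1 : HasDerivWithinAt (fun t => tang r₂ L₂ (t - L₁)) ((1:ℝ) • acc r₂ L₂ (s - L₁))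
        (Icc L₁ (L₁+L₂)) s :=
      HasDerivWithinAt.scomp_of_eq s (hD₂' _ (hmap hs)) hshift hmap rfl
    rw [one_smul] at h1
    exact A.hasFDerivAt.comp_hasDerivWithinAt s h1
  have hjT : tang r₁ L₁ L₁ = A (tang r₂ L₂ 0) := (rotCLM_tang hL₁ hL₂ hκ h₁ h₂).symm
  have hjA : acc r₁ L₁ L₁ = A (acc r₂ L₂ 0) := (rotCLM_acc hL₁ hL₂ hκ h₁ h₂).symm
  have hT1 : EqOn Tf (tang r₁ L₁) (Icc 0 L₁) := fun s hs => if_pos hs.2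
  have hT2 : EqOn Tf (fun s => A (tang r₂ L₂ (s - L₁))) (Icc L₁ (L₁+L₂)) := by
    intro s hs
    by_cases h : s ≤ L₁
    · have hsl : s = L₁ := le_antisymm h hs.1
      rw [hsl]
      show (if L₁ ≤ L₁ then tang r₁ L₁ L₁ else A (tang r₂ L₂ (L₁ - L₁)))
        = A (tang r₂ L₂ (L₁ - L₁))
      rw [if_pos le_rfl, sub_self]
      exact hjT
    · exact if_neg h
  have hA1 : EqOn Af (acc r₁ L₁) (Icc 0 L₁) := fun s hs => if_pos hs.2
  have hA2 : EqOn Af (fun s => A (acc r₂ L₂ (s - L₁))) (Icc L₁ (L₁+L₂)) := by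
    intro s hs
    by_cases h : s ≤ L₁
    · have hsl : s = L₁ := le_antisymm h hs.1
      rw [hsl]
      show (if L₁ ≤ L₁ then acc r₁ L₁ L₁ else A (acc r₂ L₂ (L₁ - L₁)))
        = A (acc r₂ L₂ (L₁ - L₁))
      rw [if_pos le_rfl, sub_self]
      exact hjA
    · exact if_neg h
  have hDF : ∀ s ∈ Icc (0:ℝ) (L₁+L₂), HasDerivWithinAt F (Tf s) (Icc 0 (L₁+L₂)) s := by
    intro s hs
    rw [← hJ] at hs ⊢
    refine hasDerivWithinAt_glue ?_ ?_ hs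
    · intro h1
      rw [hT1 h1]
      exact (hasDeriv_tang h₁ s h1).congr (fun y hy => hF1 hy) (hF1 h1)
    · intro h2m
      rw [hT2 h2m]
      exact (hu s h2m).congr (fun y hy => hF2 hy) (hF2 h2m)
  have htangF : ∀ s ∈ Icc (0:ℝ) (L₁+L₂), tang F (L₁+L₂) s = Tf s :=
    fun s hs => (hDF s hs).derivWithin (hudJ s hs)
  have hDT : ∀ s ∈ Icc (0:ℝ) (L₁+L₂), HasDerivWithinAt Tf (Af s) (Icc 0 (L₁+L₂)) s := by
    intro s hs
    rw [← hJ] at hs ⊢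
    refine hasDerivWithinAt_glue ?_ ?_ hs
    · intro h1
      rw [hA1 h1]
      exact (hasDeriv_acc hL₁ h₁ s h1).congr (fun y hy => hT1 hy) (hT1 h1)
    · intro h2m
      rw [hA2 h2m]
      exact (hu' s h2m).congr (fun y hy => hT2 hy) (hT2 h2m)
  have haccF : ∀ s ∈ Icc (0:ℝ) (L₁+L₂), acc F (L₁+L₂) s = Af s := by
    intro s hs
    have h0 : HasDerivWithinAt (fun t => derivWithin F (Icc 0 (L₁+L₂)) t) (Af s)
        (Icc 0 (L₁+L₂)) s :=
      (hDT s hs).congr (fun y hy => htangF y hy) (htangF s hs)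
    exact h0.derivWithin (hudJ s hs)
  have hAnorm := rotCLM_norm hL₁ hL₂ hκ h₁ h₂
  have hTnorm : ∀ s ∈ Icc (0:ℝ) (L₁+L₂), ‖Tf s‖ = 1 := by
    intro s hs
    by_cases h : s ≤ L₁
    · rw [hT1 ⟨hs.1, h⟩]; exact h₁.2.1 s ⟨hs.1, h⟩
    · have hm : s - L₁ ∈ Icc (0:ℝ) L₂ := hmap ⟨(not_le.1 h).le, hs.2⟩
      rw [hT2 ⟨(not_le.1 h).le, hs.2⟩]
      rw [hAnorm]
      exact h₂.2.1 _ hm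
  have hAnorm' : ∀ s ∈ Icc (0:ℝ) (L₁+L₂), ‖Af s‖ = κ := by
    intro s hs
    by_cases h : s ≤ L₁
    · rw [hA1 ⟨hs.1, h⟩]; exact h₁.2.2 s ⟨hs.1, h⟩
    · have hm : s - L₁ ∈ Icc (0:ℝ) L₂ := hmap ⟨(not_le.1 h).le, hs.2⟩
      rw [hA2 ⟨(not_le.1 h).le, hs.2⟩]
      rw [hAnorm]
      exact h₂.2.2 _ hm
  have hAfc : ContinuousOn Af (Icc (0:ℝ) (L₁+L₂)) := by
    rw [← hJ]
    refine continuousOn_glue ((contOn_acc hL₁ h₁).congr hA1) ?_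
    refine (ContinuousOn.congr ?_ hA2)
    exact A.continuous.comp_continuousOn
      ((contOn_acc hL₂ h₂).comp ((continuous_id.sub continuous_const).continuousOn) hmap)
  have hTfc : ContDiffOn ℝ 1 Tf (Icc (0:ℝ) (L₁+L₂)) := by
    rw [show (1 : WithTop ℕ∞) = 0 + 1 by norm_num]
    refine (contDiffOn_succ_iff_derivWithin hudJ).2
      ⟨fun s hs => (hDT s hs).differentiableWithinAt, by simp, ?_⟩
    rw [contDiffOn_zero]
    exact hAfc.congr (fun s hs => (hDT s hs).derivWithin (hudJ s hs))
  have hcF : ContDiffOn ℝ 2 F (Icc (0:ℝ) (L₁+L₂)) := by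
    rw [show (2 : WithTop ℕ∞) = 1 + 1 by norm_num]
    refine (contDiffOn_succ_iff_derivWithin hudJ).2
      ⟨fun s hs => (hDF s hs).differentiableWithinAt, by simp, ?_⟩
    exact hTfc.congr htangF
  refine ⟨⟨hcF, ?_, ?_⟩, ?_, ?_⟩
  · intro s hs; rw [show tang F (L₁+L₂) s = Tf s from htangF s hs]; exact hTnorm s hs
  · intro s hs; rw [show acc F (L₁+L₂) s = Af s from haccF s hs]; exact hAnorm' s hs
  · intro s hs
    have hsJ : s ∈ Icc (0:ℝ) (L₁+L₂) := ⟨hs.1, by linarith [hs.2]⟩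
    rw [show acc F (L₁+L₂) s = Af s from haccF s hsJ, hA1 hs]
    exact acc_eq_smul_nor hκ h₁ hs
  · intro s hs
    have hsJ : s ∈ Icc (0:ℝ) (L₁+L₂) := ⟨le_trans hL₁.le hs.1, hs.2⟩
    rw [show acc F (L₁+L₂) s = Af s from haccF s hsJ, hA2 hs, frameRot_eq_rotCLM]
    show A (acc r₂ L₂ (s - L₁)) = κ • A (nor r₂ L₂ (s - L₁))
    rw [acc_eq_smul_nor hκ h₂ (hmap hs), map_smul]
end
end

section
/- Let u, u', v, v' ∈ ℝ³ be points all of whose coordinates are integer multiples of 4π, such that u' − u and v' − v each equal ±4π times a standard basis vector of ℝ³. If the closed segments [u, u'] and [v, v'] are disjoint, then the distance between the segments [u, u'] and [v, v'] is at least 4π. -/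
open Set Metric Real

noncomputable section

/-- The `i`-th standard basis vector of `ℝ³`. -/
def stdBasis3 (i : Fin 3) : E3 := EuclideanSpace.single i 1

/-- A point of `ℝ³` all of whose coordinates are integer multiples of `4π`. -/
def IsLatticePoint (u : E3) : Prop := ∀ i : Fin 3, ∃ k : ℤ, u i = 4 * π * k

/-- `u' − u` equals `±4π` times a standard basis vector. -/
def IsLatticeStep (u u' : E3) : Prop :=
  ∃ i : Fin 3, u' - u = (4 * π) • stdBasis3 i ∨ u' - u = -((4 * π) • stdBasis3 i)

/-! An axis-parallel segment with lattice endpoints is a degenerate box `∏ₖ [uₖ, u'ₖ]`, so two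
disjoint such segments are disjoint boxes and hence have disjoint intervals in some coordinate `k`.
Those intervals have endpoints in `4πℤ`, so they are at least `4π` apart, and the difference of
`k`-th coordinates is a lower bound for the Euclidean distance. -/

theorem Set.lt_or_lt_of_disjoint_Icc {α : Type*} [LinearOrder α] {a b c d : α}
    (hab : a ≤ b) (hcd : c ≤ d) (h : Disjoint (Icc a b) (Icc c d)) : b < c ∨ d < a := by
  rw [disjoint_iff_inter_eq_empty, Icc_inter_Icc, Icc_eq_empty_iff] at h
  by_contra! hcon
  exact h (le_inf (sup_le hab hcon.1) (sup_le hcon.2 hcd))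

theorem add_le_of_lt_of_mem_intMultiples {c a b : ℝ} (ha : ∃ m : ℤ, a = c * m)
    (hb : ∃ n : ℤ, b = c * n) (hab : a < b) : a + c ≤ b := by
  rcases le_or_gt c 0 with hc | hc
  · linarith
  obtain ⟨m, rfl⟩ := ha
  obtain ⟨n, rfl⟩ := hb
  have hmn : m + 1 ≤ n := by exact_mod_cast (mul_lt_mul_iff_right₀ hc).1 hab
  calc c * m + c = c * ((m + 1 : ℤ) : ℝ) := by push_cast; ring
    _ ≤ c * n := by gcongr

theorem le_abs_sub_of_disjoint_uIcc {c a b a' b' x y : ℝ} (ha : ∃ m : ℤ, a = c * m)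
    (hb : ∃ m : ℤ, b = c * m) (ha' : ∃ m : ℤ, a' = c * m) (hb' : ∃ m : ℤ, b' = c * m)
    (h : Disjoint (uIcc a b) (uIcc a' b')) (hx : x ∈ uIcc a b) (hy : y ∈ uIcc a' b') :
    c ≤ |x - y| := by
  let P : ℝ → Prop := fun t => ∃ m : ℤ, t = c * m
  rcases lt_or_lt_of_disjoint_Icc inf_le_sup inf_le_sup h with hlt | hlt
  · have hgap := add_le_of_lt_of_mem_intMultiples (sup_ind (p := P) a b ha hb)
      (inf_ind (p := P) a' b' ha' hb') hlt
    exact le_abs.2 (Or.inr (by linarith [hx.2, hy.1]))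
  · have hgap := add_le_of_lt_of_mem_intMultiples (sup_ind (p := P) a' b' ha' hb')
      (inf_ind (p := P) a b ha hb) hlt
    exact le_abs.2 (Or.inl (by linarith [hx.1, hy.2]))

theorem Pi.segment_eq_univ_pi_uIcc {ι 𝕜 : Type*} [DecidableEq ι] [Field 𝕜] [LinearOrder 𝕜]
    [IsStrictOrderedRing 𝕜] {x y : ι → 𝕜} {i : ι} (h : ∀ k ≠ i, x k = y k) :
    segment 𝕜 x y = univ.pi fun k => uIcc (x k) (y k) := by
  refine Subset.antisymm (fun z hz => ?_) fun z hz => ?_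
  · simpa only [segment_eq_uIcc] using Pi.segment_subset (s := univ) x y hz
  have hy_eq : y = Function.update x i (y i) :=
    Function.eq_update_iff.2 ⟨rfl, fun k hk => (h k hk).symm⟩
  have hz_eq : z = Function.update x i (z i) :=
    Function.eq_update_iff.2 ⟨rfl, fun k hk => by simpa [h k hk] using hz k (mem_univ k)⟩
  have hseg := Pi.image_update_segment (𝕜 := 𝕜) i (x i) (y i) x
  rw [Function.update_eq_self, ← hy_eq] at hseg
  rw [hz_eq, ← hseg, segment_eq_uIcc]
  exact mem_image_of_mem _ (hz i (mem_univ i))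

theorem WithLp.segment_eq_preimage_ofLp {p : ENNReal} {𝕜 V : Type*} [Semiring 𝕜]
    [PartialOrder 𝕜] [AddCommGroup V] [Module 𝕜 V] (u v : WithLp p V) :
    segment 𝕜 u v = ofLp ⁻¹' segment 𝕜 (ofLp u) (ofLp v) := by
  ext x
  refine exists₂_congr fun a b => ?_
  rw [← (WithLp.ofLp_injective p).eq_iff, WithLp.ofLp_add, WithLp.ofLp_smul, WithLp.ofLp_smul]

theorem EuclideanSpace.segment_eq_preimage_univ_pi_uIcc {ι : Type*} [DecidableEq ι]
    {u u' : EuclideanSpace ℝ ι} {i : ι} (h : ∀ k ≠ i, u k = u' k) :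
    segment ℝ u u' = WithLp.ofLp ⁻¹' univ.pi fun k => uIcc (u k) (u' k) := by
  rw [WithLp.segment_eq_preimage_ofLp, Pi.segment_eq_univ_pi_uIcc h]

theorem IsLatticeStep.exists_forall_ne_apply_eq {u u' : E3} (h : IsLatticeStep u u') :
    ∃ i, ∀ k ≠ i, u k = u' k := by
  obtain ⟨i, h | h⟩ := h <;> refine ⟨i, fun k hk => Eq.symm ?_⟩ <;>
  · simpa [stdBasis3, hk, sub_eq_zero] using congrArg (· k) h

/-- if `u, u', v, v' ∈ ℝ³` have all coordinates integer multiples of `4π`,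
`u' − u` and `v' − v` each equal `±4π` times a standard basis vector, and the closed
segments `[u, u']` and `[v, v']` are disjoint, then the distance between the two
segments is at least `4π`. -/
theorem lattice_segments_far_apart (u u' v v' : E3)
    (hu : IsLatticePoint u) (hu' : IsLatticePoint u')
    (hv : IsLatticePoint v) (hv' : IsLatticePoint v')
    (hstep₁ : IsLatticeStep u u') (hstep₂ : IsLatticeStep v v')
    (hdisj : Disjoint (segment ℝ u u') (segment ℝ v v')) :
    ∀ x ∈ segment ℝ u u', ∀ y ∈ segment ℝ v v', 4 * π ≤ dist x y := by
  intro x hx y hy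
  obtain ⟨i, hi⟩ := hstep₁.exists_forall_ne_apply_eq
  obtain ⟨j, hj⟩ := hstep₂.exists_forall_ne_apply_eq
  simp only [EuclideanSpace.segment_eq_preimage_univ_pi_uIcc hi,
    EuclideanSpace.segment_eq_preimage_univ_pi_uIcc hj] at hx hy hdisj
  obtain ⟨k, hk⟩ :=
    disjoint_univ_pi.1 ((disjoint_preimage_iff (WithLp.ofLp_surjective 2)).1 hdisj)
  calc 4 * π ≤ |x k - y k| :=
        le_abs_sub_of_disjoint_uIcc (hu k) (hu' k) (hv k) (hv' k) hk (hx k (mem_univ k))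
          (hy k (mem_univ k))
    _ ≤ dist x y := by simpa only [Real.dist_eq] using PiLp.dist_apply_le x y k
end
end

section
/- Every lattice path can be imitated by a C² curve of constant curvature: for every v₀ ∈ ℝ³ and every finite sequence E₁, …, Eₙ ∈ {±4π·e₁, ±4π·e₂, ±4π·e₃} (where e₁, e₂, e₃ is the standard basis of ℝ³), there exist L > 0, a C² unit-speed curve r : [0, L] → ℝ³ with ‖r''(s)‖ = 1 for all s, and parameters 0 = s₀ < s₁ < ⋯ < sₙ = L such that r(sₘ) = v₀ + E₁ + ⋯ + Eₘ for every m = 0, 1, …, n, and the vectors r'(sₘ) and r''(sₘ) do not depend on m. -/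
open Set Metric Real

noncomputable section

/-! A unit-speed curve of curvature one is `r = v₀ + ∫ T`, where the unit tangent `T` is a `C¹`
curve on the unit sphere with `‖T'‖ = 1`; such tangent curves can be concatenated whenever the
frames `(T, T')` match, and the displacements add up. The pieces are circles on the sphere. A
full circle of spherical radius `ρ` about the axis `A = cos ρ • T₀ + sin ρ • B₀` starts and ends
at the frame `(T₀, N₀)` of an orthonormal triple `(T₀, N₀, B₀)` and displaces `r` by
`2π sin ρ cos ρ • A`. With `sin ρ cos² ρ = 1/3`, three pairs of such loops tilted towards `B₀`
and `-B₀` move `r` by `4π • T₀`; with `sin² ρ cos ρ = 1/3`, three loops at `(T₀, N₀)` and three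
at `(-T₀, -N₀)` move `r` by `4π • B₀`. A great-circle arc of angle `π/2`, a closed block at the
rotated frame `(N₀, -T₀)` and an arc of angle `3π/2` back form a closed block with the same
displacement, so each of the six lattice steps is realised by a closed block at the frame
`(e₁, e₂)`, and the blocks are concatenated along the path.
-/

section glueAt

variable {α : Type*} {c : ℝ} {f g : ℝ → α} {s : ℝ}

def glueAt (c : ℝ) (f g : ℝ → α) (s : ℝ) : α := if s ≤ c then f s else g (s - c)

lemma glueAt_of_le (h : s ≤ c) : glueAt c f g s = f s := if_pos h

lemma glueAt_of_ge (hfg : f c = g 0) (h : c ≤ s) : glueAt c f g s = g (s - c) := by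
  rcases h.eq_or_lt with rfl | h
  · rw [glueAt_of_le le_rfl, hfg, sub_self]
  · exact if_neg h.not_ge

lemma glueAt_add (hfg : f c = g 0) {t : ℝ} (ht : 0 ≤ t) : glueAt c f g (c + t) = g t := by
  rw [glueAt_of_ge hfg (le_add_of_nonneg_right ht), add_sub_cancel_left]

lemma continuous_glueAt [TopologicalSpace α] (hf : Continuous f) (hg : Continuous g)
    (hfg : f c = g 0) : Continuous (glueAt c f g) :=
  Continuous.if_le hf (hg.comp (continuous_sub_right c)) continuous_id continuous_const
    fun s hs => by rw [hs, sub_self, hfg]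

variable {F : Type*} [NormedAddCommGroup F] [NormedSpace ℝ F] {f g : ℝ → F}

lemma hasDerivAt_glueAt (hf : Differentiable ℝ f) (hg : Differentiable ℝ g) (hfg : f c = g 0)
    (hfg' : deriv f c = deriv g 0) (s : ℝ) :
    HasDerivAt (glueAt c f g) (glueAt c (deriv f) (deriv g) s) s := by
  have hg' : ∀ u, HasDerivAt (fun u => g (u - c)) (deriv g (u - c)) u := fun u =>
    (hg (u - c)).hasDerivAt.comp_sub_const u c
  rcases lt_trichotomy s c with h | rfl | h
  · rw [glueAt_of_le h.le]
    exact (hf s).hasDerivAt.congr_of_eventuallyEq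
      (eventually_le_nhds h |>.mono fun u hu => glueAt_of_le hu)
  · have hleft : HasDerivWithinAt (glueAt s f g) (deriv f s) (Iic s) s :=
      (hf s).hasDerivAt.hasDerivWithinAt.congr (fun u hu => glueAt_of_le hu)
        (glueAt_of_le le_rfl)
    have hright : HasDerivWithinAt (glueAt s f g) (deriv f s) (Ici s) s := by
      have := (hg' s).hasDerivWithinAt (s := Ici s)
      rw [sub_self, ← hfg'] at this
      exact this.congr (fun u hu => glueAt_of_ge hfg hu) (glueAt_of_ge hfg le_rfl)
    rw [glueAt_of_le le_rfl]
    simpa only [Iic_union_Ici, hasDerivWithinAt_univ] using hleft.union hright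
  · rw [glueAt_of_ge hfg' h.le]
    exact (hg' s).congr_of_eventuallyEq
      (eventually_ge_nhds h |>.mono fun u hu => glueAt_of_ge hfg hu)

lemma deriv_glueAt (hf : Differentiable ℝ f) (hg : Differentiable ℝ g) (hfg : f c = g 0)
    (hfg' : deriv f c = deriv g 0) : deriv (glueAt c f g) = glueAt c (deriv f) (deriv g) :=
  funext fun s => (hasDerivAt_glueAt hf hg hfg hfg' s).deriv

lemma integral_glueAt (hf : Continuous f) (hg : Continuous g) (hfg : f c = g 0)
    (hc : 0 ≤ c) {t : ℝ} (ht : 0 ≤ t) :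
    ∫ u in (0)..(c + t), glueAt c f g u = (∫ u in (0)..c, f u) + ∫ u in (0)..t, g u := by
  have hcont := continuous_glueAt hf hg hfg
  rw [← intervalIntegral.integral_add_adjacent_intervals (b := c)
    (hcont.intervalIntegrable _ _) (hcont.intervalIntegrable _ _)]
  congr 1
  · refine intervalIntegral.integral_congr fun u hu => ?_
    rw [uIcc_of_le hc] at hu
    exact glueAt_of_le hu.2
  · rw [intervalIntegral.integral_congr (g := fun u => g (u - c)) fun u hu => ?_,
      intervalIntegral.integral_comp_sub_right, sub_self, add_sub_cancel_left]
    rw [uIcc_of_le (le_add_of_nonneg_right ht)] at hu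
    exact glueAt_of_ge hfg hu.1

end glueAt

section TangentPath

variable {F : Type*} [NormedAddCommGroup F] [NormedSpace ℝ F]

variable (F) in
/-- The unit tangent `T = r'` of a unit-speed curve `r` of curvature one on `[0, len]`. -/
structure TangentPath where
  len : ℝ
  tangent : ℝ → F
  len_pos : 0 < len
  contDiff : ContDiff ℝ 1 tangent
  norm_tangent : ∀ s, ‖tangent s‖ = 1
  norm_deriv : ∀ s, ‖deriv tangent s‖ = 1

namespace TangentPath

def frame (P : TangentPath F) (s : ℝ) : F × F := (P.tangent s, deriv P.tangent s)

def displacement (P : TangentPath F) : F := ∫ s in (0)..P.len, P.tangent s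

lemma differentiable (P : TangentPath F) : Differentiable ℝ P.tangent :=
  P.contDiff.differentiable one_ne_zero

lemma continuous_deriv (P : TangentPath F) : Continuous (deriv P.tangent) :=
  P.contDiff.continuous_deriv le_rfl

section append

variable {P Q : TangentPath F}

lemma tangent_eq_of_frame_eq (h : P.frame P.len = Q.frame 0) : P.tangent P.len = Q.tangent 0 :=
  congrArg Prod.fst h

lemma deriv_eq_of_frame_eq (h : P.frame P.len = Q.frame 0) :
    deriv P.tangent P.len = deriv Q.tangent 0 :=
  congrArg Prod.snd h

lemma deriv_glueAt_tangent (h : P.frame P.len = Q.frame 0) :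
    deriv (glueAt P.len P.tangent Q.tangent) = glueAt P.len (deriv P.tangent) (deriv Q.tangent) :=
  deriv_glueAt P.differentiable Q.differentiable (tangent_eq_of_frame_eq h)
    (deriv_eq_of_frame_eq h)

variable (P Q) in
def append (h : P.frame P.len = Q.frame 0) : TangentPath F where
  len := P.len + Q.len
  tangent := glueAt P.len P.tangent Q.tangent
  len_pos := add_pos P.len_pos Q.len_pos
  contDiff := contDiff_one_iff_deriv.2
    ⟨fun s => (hasDerivAt_glueAt P.differentiable Q.differentiable (tangent_eq_of_frame_eq h)
      (deriv_eq_of_frame_eq h) s).differentiableAt,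
      deriv_glueAt_tangent h ▸
        continuous_glueAt P.continuous_deriv Q.continuous_deriv (deriv_eq_of_frame_eq h)⟩
  norm_tangent s := by
    unfold glueAt; split_ifs
    exacts [P.norm_tangent s, Q.norm_tangent _]
  norm_deriv s := by
    rw [deriv_glueAt_tangent h]; unfold glueAt; split_ifs
    exacts [P.norm_deriv s, Q.norm_deriv _]

lemma append_len (h : P.frame P.len = Q.frame 0) : (P.append Q h).len = P.len + Q.len := rfl

lemma frame_append_of_le (h : P.frame P.len = Q.frame 0) {t : ℝ} (ht : t ≤ P.len) :
    (P.append Q h).frame t = P.frame t := by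
  simp only [frame, append, deriv_glueAt_tangent h, glueAt_of_le ht]

lemma frame_append_add (h : P.frame P.len = Q.frame 0) {t : ℝ} (ht : 0 ≤ t) :
    (P.append Q h).frame (P.len + t) = Q.frame t := by
  simp only [frame, append, deriv_glueAt_tangent h, glueAt_add (tangent_eq_of_frame_eq h) ht,
    glueAt_add (deriv_eq_of_frame_eq h) ht]

lemma integral_append_add (h : P.frame P.len = Q.frame 0) {t : ℝ} (ht : 0 ≤ t) :
    ∫ u in (0)..(P.len + t), (P.append Q h).tangent u =
      P.displacement + ∫ u in (0)..t, Q.tangent u :=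
  integral_glueAt P.contDiff.continuous Q.contDiff.continuous (tangent_eq_of_frame_eq h)
    P.len_pos.le ht

end append

end TangentPath

def Connects (F₀ F₁ : F × F) (d : F) : Prop :=
  ∃ P : TangentPath F, P.frame 0 = F₀ ∧ P.frame P.len = F₁ ∧ P.displacement = d

namespace Connects

variable {F₀ F₁ F₂ : F × F} {d d' : F}

lemma trans (h : Connects F₀ F₁ d) (h' : Connects F₁ F₂ d') : Connects F₀ F₂ (d + d') := by
  obtain ⟨P, hP0, hP1, rfl⟩ := h
  obtain ⟨Q, hQ0, hQ1, rfl⟩ := h'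
  have hPQ : P.frame P.len = Q.frame 0 := hP1.trans hQ0.symm
  refine ⟨P.append Q hPQ, ?_, ?_, ?_⟩
  · rw [TangentPath.frame_append_of_le _ P.len_pos.le, hP0]
  · rw [TangentPath.append_len, TangentPath.frame_append_add _ Q.len_pos.le, hQ1]
  · exact TangentPath.integral_append_add hPQ Q.len_pos.le

lemma nsmul (h : Connects F₀ F₀ d) {k : ℕ} (hk : k ≠ 0) : Connects F₀ F₀ (k • d) := by
  induction k with
  | zero => exact absurd rfl hk
  | succ k ih =>
    rcases eq_or_ne k 0 with rfl | hk
    · simpa using h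
    · simpa only [succ_nsmul] using (ih hk).trans h

end Connects

theorem exists_tangentPath_of_connects (F₀ : F × F) {n : ℕ} (hn : 1 ≤ n) (d : ℕ → F)
    (hd : ∀ m < n, Connects F₀ F₀ (d m)) :
    ∃ (P : TangentPath F) (s : ℕ → ℝ), s 0 = 0 ∧ s n = P.len ∧ StrictMono s ∧
      ∀ m ≤ n, P.frame (s m) = F₀ ∧
        ∫ u in (0)..s m, P.tangent u = ∑ k ∈ Finset.range m, d k := by
  induction n, hn using Nat.le_induction generalizing d with
  | base =>
    obtain ⟨P, hP0, hP1, hPd⟩ := hd 0 one_pos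
    refine ⟨P, fun m => m * P.len, by simp, by simp, ?_, fun m hm => ?_⟩
    · exact fun a b hab => mul_lt_mul_of_pos_right (Nat.cast_lt.2 hab) P.len_pos
    · interval_cases m
      · simpa using hP0
      · simpa using ⟨hP1, hPd⟩
  | succ n hn ih =>
    obtain ⟨Q, hQ0, hQ1, hQd⟩ := hd 0 n.succ_pos
    obtain ⟨P, s, hs0, hsn, hs, hP⟩ :=
      ih (fun k => d (k + 1)) fun m hm => hd (m + 1) (Nat.succ_lt_succ hm)
    have hQP : Q.frame Q.len = P.frame 0 := by rw [hQ1, ← hs0, (hP 0 n.zero_le).1]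
    have hs_nonneg : ∀ m, 0 ≤ s m := fun m => hs0 ▸ hs.monotone m.zero_le
    refine ⟨Q.append P hQP, fun m => Nat.casesOn m 0 fun m => Q.len + s m, rfl,
      by simp [hsn, TangentPath.append_len], ?_, fun m hm => ?_⟩
    · refine strictMono_nat_of_lt_succ fun m => ?_
      cases m with
      | zero => simpa [hs0] using Q.len_pos
      | succ m => simpa using hs (Nat.lt_succ_self m)
    · cases m with
      | zero => simpa [TangentPath.frame_append_of_le hQP Q.len_pos.le] using hQ0
      | succ m =>
        obtain ⟨hframe, hint⟩ := hP m (by omega)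
        refine ⟨(TangentPath.frame_append_add hQP (hs_nonneg m)).trans hframe, ?_⟩
        rw [TangentPath.integral_append_add hQP (hs_nonneg m), hint, hQd,
          Finset.sum_range_succ', add_comm]

end TangentPath

section circle

variable {F : Type*} [NormedAddCommGroup F] [InnerProductSpace ℝ F]

lemma Orthonormal.norm_smul_add_smul_add_smul_eq_one {u v w : F} (h : Orthonormal ℝ ![u, v, w])
    {a b c : ℝ} (habc : a ^ 2 + b ^ 2 + c ^ 2 = 1) : ‖a • u + b • v + c • w‖ = 1 := by
  have hsum : a • u + b • v + c • w = ∑ i, ![a, b, c] i • ![u, v, w] i := by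
    simp [Fin.sum_univ_three, add_assoc]
  have := h.inner_sum ![a, b, c] ![a, b, c] Finset.univ
  rw [← hsum, real_inner_self_eq_norm_sq] at this
  simp only [Fin.sum_univ_three, conj_trivial, Matrix.cons_val_zero, Matrix.cons_val_one,
    Matrix.cons_val_two, Matrix.head_cons, Matrix.tail_cons] at this
  rw [← pow_eq_one_iff_of_nonneg (norm_nonneg _) two_ne_zero, this]
  linear_combination habc

lemma hasDerivAt_cos_smul_add_sin_smul (σ : ℝ) (P Q : F) (s : ℝ) :
    HasDerivAt (fun s => cos (s / σ) • P + sin (s / σ) • Q)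
      (σ⁻¹ • (cos (s / σ) • Q - sin (s / σ) • P)) s := by
  have hdiv : HasDerivAt (fun s => s / σ) σ⁻¹ s := by
    simpa [div_eq_mul_inv] using (hasDerivAt_id s).mul_const σ⁻¹
  refine ((((hasDerivAt_cos _).comp s hdiv).smul_const P).add
    (((hasDerivAt_sin _).comp s hdiv).smul_const Q)).congr_deriv ?_
  module

lemma integral_cos_smul_add_sin_smul [CompleteSpace F] {σ : ℝ} (hσ : σ ≠ 0) (P Q : F)
    (ℓ : ℝ) :
    ∫ s in (0)..ℓ, (cos (s / σ) • P + sin (s / σ) • Q) =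
      σ • (sin (ℓ / σ) • P + (1 - cos (ℓ / σ)) • Q) := by
  have hP : Continuous fun s => cos (s / σ) • P := by fun_prop
  have hQ : Continuous fun s => sin (s / σ) • Q := by fun_prop
  rw [intervalIntegral.integral_add (hP.intervalIntegrable _ _) (hQ.intervalIntegrable _ _),
    intervalIntegral.integral_smul_const, intervalIntegral.integral_smul_const,
    intervalIntegral.integral_comp_div (fun x => cos x) hσ,
    intervalIntegral.integral_comp_div (fun x => sin x) hσ, integral_cos, integral_sin]
  simp only [zero_div, sin_zero, cos_zero, smul_eq_mul]
  module

/-- For an orthonormal triple `(T, N, B)`, the unit-speed circle of spherical radius `ρ` on the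
unit sphere through `T` with velocity `N`, about the axis `cos ρ • T + sin ρ • B`. -/
def circleTangent (T N B : F) (ρ s : ℝ) : F :=
  cos ρ • (cos ρ • T + sin ρ • B) +
    sin ρ • (cos (s / sin ρ) • (sin ρ • T - cos ρ • B) + sin (s / sin ρ) • N)

variable {T N B : F} {ρ : ℝ}

lemma hasDerivAt_circleTangent (hρ : sin ρ ≠ 0) (s : ℝ) :
    HasDerivAt (circleTangent T N B ρ)
      (cos (s / sin ρ) • N - sin (s / sin ρ) • (sin ρ • T - cos ρ • B)) s := by
  refine (((hasDerivAt_cos_smul_add_sin_smul (sin ρ) (sin ρ • T - cos ρ • B) N s).const_smul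
    (sin ρ)).const_add (cos ρ • (cos ρ • T + sin ρ • B))).congr_deriv ?_
  rw [smul_smul, mul_inv_cancel₀ hρ, one_smul]

lemma contDiff_circleTangent : ContDiff ℝ 1 (circleTangent T N B ρ) := by
  unfold circleTangent; fun_prop

lemma circleTangent_eq (s : ℝ) : circleTangent T N B ρ s =
    (cos ρ ^ 2 + sin ρ ^ 2 * cos (s / sin ρ)) • T + (sin ρ * sin (s / sin ρ)) • N +
      (sin ρ * cos ρ * (1 - cos (s / sin ρ))) • B := by
  unfold circleTangent; module

lemma deriv_circleTangent (hρ : sin ρ ≠ 0) (s : ℝ) : deriv (circleTangent T N B ρ) s =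
    cos (s / sin ρ) • N - sin (s / sin ρ) • (sin ρ • T - cos ρ • B) :=
  (hasDerivAt_circleTangent hρ s).deriv

lemma integral_circleTangent [CompleteSpace F] (hρ : sin ρ ≠ 0) (ℓ : ℝ) :
    ∫ s in (0)..ℓ, circleTangent T N B ρ s = (ℓ * cos ρ) • (cos ρ • T + sin ρ • B) +
      (sin ρ * sin ρ) •
        (sin (ℓ / sin ρ) • (sin ρ • T - cos ρ • B) + (1 - cos (ℓ / sin ρ)) • N) := by
  have hc : Continuous fun s =>
      sin ρ • (cos (s / sin ρ) • (sin ρ • T - cos ρ • B) + sin (s / sin ρ) • N) := by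
    fun_prop
  unfold circleTangent
  rw [intervalIntegral.integral_add intervalIntegrable_const
      (hc.intervalIntegrable _ _), intervalIntegral.integral_const,
    intervalIntegral.integral_smul, integral_cos_smul_add_sin_smul hρ]
  module

def circlePath (h : Orthonormal ℝ ![T, N, B]) (hρ : sin ρ ≠ 0) (ℓ : ℝ) (hℓ : 0 < ℓ) :
    TangentPath F where
  len := ℓ
  tangent := circleTangent T N B ρ
  len_pos := hℓ
  contDiff := contDiff_circleTangent
  norm_tangent s := by
    rw [circleTangent_eq]
    refine h.norm_smul_add_smul_add_smul_eq_one ?_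
    linear_combination (cos ρ ^ 2 + sin ρ ^ 2 * cos (s / sin ρ) ^ 2 + 1) * sin_sq_add_cos_sq ρ +
      sin ρ ^ 2 * sin_sq_add_cos_sq (s / sin ρ)
  norm_deriv s := by
    rw [deriv_circleTangent hρ]
    have : cos (s / sin ρ) • N - sin (s / sin ρ) • (sin ρ • T - cos ρ • B) =
        (-(sin ρ * sin (s / sin ρ))) • T + cos (s / sin ρ) • N +
          (cos ρ * sin (s / sin ρ)) • B := by module
    rw [this]
    refine h.norm_smul_add_smul_add_smul_eq_one ?_
    linear_combination sin (s / sin ρ) ^ 2 * sin_sq_add_cos_sq ρ + sin_sq_add_cos_sq (s / sin ρ)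

variable {h : Orthonormal ℝ ![T, N, B]} {hρ : sin ρ ≠ 0} {ℓ : ℝ} {hℓ : 0 < ℓ}

lemma circlePath_len : (circlePath h hρ ℓ hℓ).len = ℓ := rfl

lemma circlePath_frame (s : ℝ) : (circlePath h hρ ℓ hℓ).frame s = (circleTangent T N B ρ s,
    cos (s / sin ρ) • N - sin (s / sin ρ) • (sin ρ • T - cos ρ • B)) := by
  rw [TangentPath.frame, ← deriv_circleTangent hρ]; rfl

lemma circlePath_frame_of_cos_eq_one {s : ℝ} (hcos : cos (s / sin ρ) = 1)
    (hsin : sin (s / sin ρ) = 0) : (circlePath h hρ ℓ hℓ).frame s = (T, N) := by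
  rw [circlePath_frame, circleTangent, hcos, hsin]
  simp only [one_smul, zero_smul, add_zero, sub_zero]
  ext
  · linear_combination (norm := module) sin_sq_add_cos_sq ρ • T
  · rfl

lemma circlePath_frame_zero : (circlePath h hρ ℓ hℓ).frame 0 = (T, N) :=
  circlePath_frame_of_cos_eq_one (by simp) (by simp)

end circle

lemma exists_sin_mul_cos_sq_eq_one_third : ∃ ρ ∈ Ioo 0 (π / 2), sin ρ * cos ρ ^ 2 = 1 / 3 := by
  have hcont : ContinuousOn (fun t => sin t * cos t ^ 2) (Icc 0 (π / 4)) := by fun_prop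
  have hmem : 1 / 3 ∈ Ioo (sin 0 * cos 0 ^ 2) (sin (π / 4) * cos (π / 4) ^ 2) := by
    rw [sin_zero, cos_pi_div_four, sin_pi_div_four]
    constructor
    · norm_num
    · nlinarith [sq_sqrt (show (0 : ℝ) ≤ 2 by norm_num), sqrt_nonneg 2]
  obtain ⟨ρ, hρ, hρ'⟩ := intermediate_value_Ioo (by positivity) hcont hmem
  exact ⟨ρ, ⟨hρ.1, hρ.2.trans (by linarith [pi_pos])⟩, hρ'⟩

lemma exists_sin_sq_mul_cos_eq_one_third : ∃ ρ ∈ Ioo 0 (π / 2), sin ρ ^ 2 * cos ρ = 1 / 3 := by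
  obtain ⟨ρ, hρ, hρ'⟩ := exists_sin_mul_cos_sq_eq_one_third
  refine ⟨π / 2 - ρ, ⟨by linarith [hρ.2], by linarith [hρ.1]⟩, ?_⟩
  rw [sin_pi_div_two_sub, cos_pi_div_two_sub, ← hρ']
  ring

section blocks

variable {F : Type*} [NormedAddCommGroup F] [InnerProductSpace ℝ F] {T N B : F}

lemma Orthonormal.quarterTurn (h : Orthonormal ℝ ![T, N, B]) : Orthonormal ℝ ![N, -T, B] :=
  (h.comp _ (Equiv.swap (0 : Fin 3) 1).injective).orthonormal_of_forall_eq_or_eq_neg fun i => by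
    fin_cases i <;> simp [Equiv.swap_apply_of_ne_of_ne]

lemma Orthonormal.neg_last (h : Orthonormal ℝ ![T, N, B]) : Orthonormal ℝ ![T, N, -B] :=
  h.orthonormal_of_forall_eq_or_eq_neg fun i => by fin_cases i <;> simp

variable [CompleteSpace F]

lemma connects_loop (h : Orthonormal ℝ ![T, N, B]) {ρ : ℝ} (hρ : 0 < sin ρ) :
    Connects (T, N) (T, N) ((2 * π * sin ρ * cos ρ) • (cos ρ • T + sin ρ • B)) := by
  have hℓ : (2 * π * sin ρ) / sin ρ = 2 * π := by field_simp
  refine ⟨circlePath h hρ.ne' (2 * π * sin ρ) (by positivity), circlePath_frame_zero, ?_, ?_⟩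
  · exact circlePath_frame_of_cos_eq_one (by rw [circlePath_len, hℓ, cos_two_pi])
      (by rw [circlePath_len, hℓ, sin_two_pi])
  · rw [TangentPath.displacement, circlePath, integral_circleTangent hρ.ne', hℓ, cos_two_pi,
      sin_two_pi]
    module

lemma connects_greatArc (h : Orthonormal ℝ ![T, N, B]) {θ : ℝ} (hθ : 0 < θ) :
    Connects (T, N) (cos θ • T + sin θ • N, cos θ • N - sin θ • T)
      (sin θ • T + (1 - cos θ) • N) := by
  refine ⟨circlePath h (ρ := π / 2) (by simp) θ hθ, circlePath_frame_zero, ?_, ?_⟩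
  · rw [circlePath_frame, circleTangent]
    simp [circlePath]
  · rw [TangentPath.displacement, circlePath, integral_circleTangent (by simp)]
    simp

lemma Connects.of_quarterTurn (h : Orthonormal ℝ ![T, N, B]) {d : F}
    (hd : Connects (N, -T) (N, -T) d) :
    Connects (T, N) (T, N) d := by
  have hcos : cos (3 * π / 2) = 0 := by
    rw [show 3 * π / 2 = π / 2 + π by ring, cos_add_pi, cos_pi_div_two, neg_zero]
  have hsin : sin (3 * π / 2) = -1 := by
    rw [show 3 * π / 2 = π / 2 + π by ring, sin_add_pi, sin_pi_div_two]
  have hout := connects_greatArc h (θ := π / 2) (by positivity)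
  have hback := connects_greatArc h.quarterTurn (θ := 3 * π / 2) (by positivity)
  simp only [cos_pi_div_two, sin_pi_div_two, hcos, hsin, zero_smul, one_smul, neg_one_smul,
    zero_add, zero_sub, sub_zero, sub_neg_eq_add, neg_neg] at hout hback
  convert (hout.trans hd).trans hback using 1
  module

lemma connects_forward (h : Orthonormal ℝ ![T, N, B]) :
    Connects (T, N) (T, N) ((4 * π) • T) := by
  obtain ⟨ρ, hρ, hρ'⟩ := exists_sin_mul_cos_sq_eq_one_third
  have hsin := sin_pos_of_pos_of_lt_pi hρ.1 (hρ.2.trans (by linarith [pi_pos]))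
  have hpair := (connects_loop h hsin).trans (connects_loop h.neg_last hsin)
  convert hpair.nsmul three_ne_zero using 1
  rw [← Nat.cast_smul_eq_nsmul ℝ]
  linear_combination (norm := module) (-12 * π * hρ') • T

lemma connects_sideways (h : Orthonormal ℝ ![T, N, B]) :
    Connects (T, N) (T, N) ((4 * π) • B) := by
  obtain ⟨ρ, hρ, hρ'⟩ := exists_sin_sq_mul_cos_eq_one_third
  have hsin := sin_pos_of_pos_of_lt_pi hρ.1 (hρ.2.trans (by linarith [pi_pos]))
  have hfront := (connects_loop h hsin).nsmul three_ne_zero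
  have hback := Connects.of_quarterTurn h <| Connects.of_quarterTurn h.quarterTurn <|
    (connects_loop h.quarterTurn.quarterTurn hsin).nsmul three_ne_zero
  convert hfront.trans hback using 1
  rw [← Nat.cast_smul_eq_nsmul ℝ, ← Nat.cast_smul_eq_nsmul ℝ]
  linear_combination (norm := module) (-12 * π * hρ') • B

end blocks

section primitive

variable {F : Type*} [NormedAddCommGroup F] [NormedSpace ℝ F] [CompleteSpace F] {g : ℝ → F}

lemma hasDerivAt_const_add_integral (hg : Continuous g) (v : F) (t : ℝ) :
    HasDerivAt (fun t => v + ∫ u in (0)..t, g u) (g t) t :=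
  ((hg.integral_hasStrictDerivAt 0 t).hasDerivAt).const_add v

lemma contDiff_two_const_add_integral (hg : ContDiff ℝ 1 g) (v : F) :
    ContDiff ℝ 2 fun t => v + ∫ u in (0)..t, g u := by
  have hderiv : deriv (fun t => v + ∫ u in (0)..t, g u) = g :=
    funext fun t => (hasDerivAt_const_add_integral hg.continuous v t).deriv
  rw [show (2 : WithTop ℕ∞) = 1 + 1 from rfl, contDiff_succ_iff_deriv, hderiv]
  exact ⟨fun t => (hasDerivAt_const_add_integral hg.continuous v t).differentiableAt,
    by simp, hg⟩

lemma derivWithin_const_add_integral {s : Set ℝ} (hs : UniqueDiffOn ℝ s) (hg : Continuous g)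
    (v : F) {t : ℝ} (ht : t ∈ s) :
    derivWithin (fun t => v + ∫ u in (0)..t, g u) s t = g t :=
  (hasDerivAt_const_add_integral hg v t).hasDerivWithinAt.derivWithin (hs t ht)

lemma derivWithin_derivWithin_const_add_integral {s : Set ℝ} (hs : UniqueDiffOn ℝ s)
    (hg : ContDiff ℝ 1 g) (v : F) {t : ℝ} (ht : t ∈ s) :
    derivWithin (derivWithin (fun t => v + ∫ u in (0)..t, g u) s) s t = deriv g t := by
  rw [derivWithin_congr (fun u hu => derivWithin_const_add_integral hs hg.continuous v hu)
    (derivWithin_const_add_integral hs hg.continuous v ht)]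
  exact ((hg.differentiable one_ne_zero) t).hasDerivAt.hasDerivWithinAt.derivWithin (hs t ht)

end primitive

lemma orthonormal_stdBasis3 : Orthonormal ℝ ![stdBasis3 0, stdBasis3 1, stdBasis3 2] := by
  have hbasis :
      ![stdBasis3 0, stdBasis3 1, stdBasis3 2] = ⇑(EuclideanSpace.basisFun (Fin 3) ℝ) := by
    ext i : 1
    fin_cases i <;> simp [stdBasis3]
  exact hbasis ▸ (EuclideanSpace.basisFun (Fin 3) ℝ).orthonormal

lemma connects_latticeStep {d : E3}
    (hd : ∃ i : Fin 3, d = (4 * π) • stdBasis3 i ∨ d = -((4 * π) • stdBasis3 i)) :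
    Connects (stdBasis3 0, stdBasis3 1) (stdBasis3 0, stdBasis3 1) d := by
  have h := orthonormal_stdBasis3
  obtain ⟨i, rfl | rfl⟩ := hd <;> fin_cases i
  · exact connects_forward h
  · exact .of_quarterTurn h (connects_forward h.quarterTurn)
  · exact connects_sideways h
  · rw [← smul_neg]
    exact .of_quarterTurn h <| .of_quarterTurn h.quarterTurn <|
      connects_forward h.quarterTurn.quarterTurn
  · rw [← smul_neg]
    exact .of_quarterTurn h <| .of_quarterTurn h.quarterTurn <|
      .of_quarterTurn h.quarterTurn.quarterTurn <|
      connects_forward h.quarterTurn.quarterTurn.quarterTurn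
  · rw [← smul_neg]
    exact connects_sideways h.neg_last

/-- every lattice path can be imitated by a C² curve of constant
curvature: for every `v₀ ∈ ℝ³` and every finite sequence `E₁, …, Eₙ` of steps of the
form `±4π·eᵢ`, there is a C² unit-speed curve `r : [0, L] → ℝ³` with `‖r''‖ = 1` and
parameters `0 = s₀ < s₁ < ⋯ < sₙ = L` such that `r(sₘ) = v₀ + E₁ + ⋯ + Eₘ` for every
`m`, and the vectors `r'(sₘ)` and `r''(sₘ)` do not depend on `m`. -/
theorem lattice_path_imitation (v₀ : E3) (n : ℕ) (hn : 1 ≤ n) (E : ℕ → E3)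
    (hE : ∀ m < n, ∃ i : Fin 3,
      E m = (4 * π) • stdBasis3 i ∨ E m = -((4 * π) • stdBasis3 i)) :
    ∃ (L : ℝ) (r : ℝ → E3) (s : ℕ → ℝ),
      0 < L ∧
      ContDiffOn ℝ 2 r (Icc 0 L) ∧
      (∀ t ∈ Icc 0 L, ‖derivWithin r (Icc 0 L) t‖ = 1) ∧
      (∀ t ∈ Icc 0 L,
        ‖derivWithin (fun u => derivWithin r (Icc 0 L) u) (Icc 0 L) t‖ = 1) ∧
      s 0 = 0 ∧ s n = L ∧
      (∀ m < n, s m < s (m + 1)) ∧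
      (∀ m ≤ n, r (s m) = v₀ + ∑ k ∈ Finset.range m, E k) ∧
      (∀ m ≤ n, ∀ m' ≤ n,
        derivWithin r (Icc 0 L) (s m) = derivWithin r (Icc 0 L) (s m')) ∧
      (∀ m ≤ n, ∀ m' ≤ n,
        derivWithin (fun u => derivWithin r (Icc 0 L) u) (Icc 0 L) (s m)
          = derivWithin (fun u => derivWithin r (Icc 0 L) u) (Icc 0 L) (s m')) := by
  obtain ⟨P, s, hs0, hsn, hs, hP⟩ := exists_tangentPath_of_connects _ hn E
    fun m hm => connects_latticeStep (hE m hm)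
  set r : ℝ → E3 := fun t => v₀ + ∫ u in (0)..t, P.tangent u
  have hIcc : UniqueDiffOn ℝ (Icc 0 P.len) := uniqueDiffOn_Icc P.len_pos
  have hr' : ∀ t ∈ Icc 0 P.len, derivWithin r (Icc 0 P.len) t = P.tangent t := fun t =>
    derivWithin_const_add_integral hIcc P.contDiff.continuous v₀
  have hr'' : ∀ t ∈ Icc 0 P.len,
      derivWithin (derivWithin r (Icc 0 P.len)) (Icc 0 P.len) t = deriv P.tangent t := fun t =>
    derivWithin_derivWithin_const_add_integral hIcc P.contDiff v₀
  have hs_mem : ∀ m ≤ n, s m ∈ Icc 0 P.len := fun m hm =>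
    ⟨hs0 ▸ hs.monotone m.zero_le, hsn ▸ hs.monotone hm⟩
  have hframe : ∀ m ≤ n, ∀ m' ≤ n, P.frame (s m) = P.frame (s m') := fun m hm m' hm' =>
    (hP m hm).1.trans (hP m' hm').1.symm
  refine ⟨P.len, r, s, P.len_pos, (contDiff_two_const_add_integral P.contDiff v₀).contDiffOn,
    fun t ht => hr' t ht ▸ P.norm_tangent t, fun t ht => hr'' t ht ▸ P.norm_deriv t, hs0, hsn,
    fun m _ => hs m.lt_succ_self, fun m hm => by rw [← (hP m hm).2],
    fun m hm m' hm' => ?_, fun m hm m' hm' => ?_⟩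
  · rw [hr' _ (hs_mem m hm), hr' _ (hs_mem m' hm')]
    exact congrArg Prod.fst (hframe m hm m' hm')
  · rw [hr'' _ (hs_mem m hm), hr'' _ (hs_mem m' hm')]
    exact congrArg Prod.snd (hframe m hm m' hm')
end
end
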